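/- arXiv:1810.01467 — 2 statements merged into one kernel-verified Lean document; each statement's English description precedes it below -/
import Mathlib

section
/- Let G = Ω₈⁺(2), realized as the commutator subgroup of the isometry group of the hyperbolic quadratic form of rank 8 over 𝔽₂. For every subgroup Q of G of cardinality 5, Q (viewed as a subgroup of its normalizer N_G(Q)) has a complement in N_G(Q); that is, N_G(Q) is a split extension N_G(Q) = Q ⋊ N̄ for some subgroup N̄. -/
abbrev V : Type := Fin 8 → ZMod 2

/-- The hyperbolic (plus-type) quadratic form of rank 8 over 𝔽₂. -/
def q (x : V) : ZMod 2 := x 0 * x 1 + x 2 * x 3 + x 4 * x 5 + x 6 * x 7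

/-- The orthogonal group O₈⁺(2): the subgroup of linear automorphisms of V preserving q. -/
def Oq : Subgroup (V ≃ₗ[ZMod 2] V) where
  carrier := {f | ∀ x, q (f x) = q x}
  one_mem' := fun _ => rfl
  mul_mem' := by
    intro f g hf hg x
    have h : (f * g) x = f (g x) := rfl
    rw [h, hf, hg]
  inv_mem' := by
    intro f hf x
    have h : f (f⁻¹ x) = x := f.apply_symm_apply x
    calc q (f⁻¹ x) = q (f (f⁻¹ x)) := (hf _).symm
    _ = q x := by rw [h]

/-- The simple group Ω₈⁺(2), the commutator subgroup of O₈⁺(2). -/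
abbrev Omega8 : Type := ↥(commutator ↥Oq)

/-!
Write `N` for the normalizer and `A` for `Q` viewed inside it, a normal subgroup of order `5`.
Since `5 ^ 3` does not divide `|GL₈(𝔽₂)|`, and `2` has order `20 > 8` modulo `25` (so that no
element of `GL₈(𝔽₂)` has order `25`), a Sylow `5`-subgroup `P ⊇ A` of `N` has order dividing `25`
and exponent `5`: it is elementary abelian. For such `P` the argument behind Gaschütz's theorem
works. `P` lies in the centralizer `C` of `A`, and the transfer `C → P` followed by a linear
projection `P → A` is a homomorphism `C → A` acting on `A` as a power prime to `5`. The product of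
its conjugates over `N ⧸ C`, a group of order prime to `5`, is invariant under conjugation, so its
kernel `D` is normal in `N`, meets `A` trivially, and `A ⊔ D ⊇ C ⊇ P`. Schur–Zassenhaus in `N ⧸ D`
then yields the complement.
-/

open Subgroup

theorem Subgroup.isMulCommutative_of_le {G : Type*} [Group G] {H K : Subgroup G} (hHK : H ≤ K)
    [IsMulCommutative K] : IsMulCommutative H :=
  ⟨⟨fun a b => Subtype.ext (setLike_mul_comm (s := K) (hHK a.2) (hHK b.2))⟩⟩

theorem Subgroup.exists_retraction_of_pow_prime_eq_one {p : ℕ} [Fact p.Prime] {P : Type*}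
    [CommGroup P] (hP : ∀ x : P, x ^ p = 1) (A : Subgroup P) :
    ∃ ϕ : P →* A, ∀ a : A, ϕ a = a := by
  let : Module (ZMod p) (Additive P) := AddCommGroup.zmodModule fun x => hP x.toMul
  let : Module (ZMod p) (Additive A) :=
    AddCommGroup.zmodModule fun x => Subtype.ext (hP (x.toMul : P))
  let ι := (MonoidHom.toAdditive A.subtype).toZModLinearMap p
  obtain ⟨ψ, hψ⟩ := ι.exists_leftInverse_of_injective
    (LinearMap.ker_eq_bot.mpr A.subtype_injective)
  exact ⟨MonoidHom.toAdditive.symm ψ.toAddMonoidHom, fun a => LinearMap.congr_fun hψ a⟩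

open scoped IsMulCommutative in
theorem Subgroup.exists_hom_inclusion_eq_pow_relIndex {G : Type*} [Group G] {p : ℕ} [Fact p.Prime]
    {A P C : Subgroup G} [IsMulCommutative P] (hP : ∀ x ∈ P, x ^ p = 1) (hAP : A ≤ P)
    (hPC : P ≤ C) (hCA : C ≤ centralizer A) [(P.subgroupOf C).FiniteIndex] :
    ∃ τ : C →* A, ∀ a : A, τ (inclusion (hAP.trans hPC) a) = a ^ P.relIndex C := by
  obtain ⟨ϕ, hϕ⟩ := exists_retraction_of_pow_prime_eq_one (fun x : P => Subtype.ext (hP x x.2))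
    (A.subgroupOf P)
  let ρ : P.subgroupOf C →* A :=
    (subgroupOfEquivOfLe hAP).toMonoidHom.comp (ϕ.comp (subgroupOfEquivOfLe hPC).toMonoidHom)
  have := isMulCommutative_of_le hAP
  refine ⟨MonoidHom.transfer ρ, fun a => ?_⟩
  have hcentral : ∀ (k : ℕ) (g : C), g⁻¹ * inclusion (hAP.trans hPC) a ^ k * g =
      inclusion (hAP.trans hPC) a ^ k := fun k g => by
    ext
    simp [mul_assoc, mem_centralizer_iff.mp (hCA g.2) _ (pow_mem a.2 k)]
  rw [MonoidHom.transfer_eq_pow ρ _ fun k g _ => hcentral k g]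
  have hϕ' : ∀ (b : G) (hb : b ∈ P), b ∈ A → ((ϕ ⟨b, hb⟩ : P) : G) = b := fun b hb hbA =>
    congrArg (fun y : A.subgroupOf P => ((y : P) : G)) (hϕ ⟨⟨b, hb⟩, hbA⟩)
  ext
  simp [ρ, relIndex, hϕ', pow_mem a.2]

section ConjNorm

open scoped IsMulCommutative

variable {G : Type*} [Group G] {A C : Subgroup G} [A.Normal] [C.Normal] [IsMulCommutative A]

def conjHom (g : G) : (C →* A) →* (C →* A) where
  toFun f := (MulAut.conjNormal g).toMonoidHom.comp (f.comp (MulAut.conjNormal g⁻¹).toMonoidHom)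
  map_one' := by ext; simp
  map_mul' f f' := by ext; simp

theorem conjHom_apply (g : G) (f : C →* A) (c : C) :
    conjHom g f c = MulAut.conjNormal g (f (MulAut.conjNormal g⁻¹ c)) :=
  rfl

theorem conjHom_mul (g h : G) (f : C →* A) : conjHom (g * h) f = conjHom g (conjHom h f) := by
  ext c
  simp only [conjHom_apply, mul_inv_rev, map_mul, MulAut.mul_apply]

theorem conjHom_eq_self_of_mem (hCA : C ≤ centralizer A) {c : G} (hc : c ∈ C) (f : C →* A) :
    conjHom c f = f := by
  have hcA : ∀ y : A, MulAut.conjNormal c y = y := fun y => by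
    ext; simp [(mem_centralizer_iff.mp (hCA hc) _ y.2).symm]
  have hconj : ∀ x : C, MulAut.conjNormal c⁻¹ x = (⟨c, hc⟩ : C)⁻¹ * x * ⟨c, hc⟩ := fun x => by
    ext; simp
  ext x
  rw [conjHom_apply, hcA, hconj, map_mul, map_mul, map_inv, mul_comm, mul_inv_cancel_left]

theorem conjHom_out_smul (hCA : C ≤ centralizer A) (g : G) (x : G ⧸ C) (f : C →* A) :
    conjHom (g • x).out f = conjHom g (conjHom x.out f) := by
  have hx : g • x = ((g * x.out : G) : G ⧸ C) := by
    conv_lhs => rw [← x.out_eq']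
    rfl
  obtain ⟨c, hc⟩ := QuotientGroup.mk_out_eq_mul C (g * x.out)
  rw [← conjHom_mul, hx, hc, conjHom_mul _ (c : G), conjHom_eq_self_of_mem hCA c.2]

theorem normal_map_ker_of_forall_conjHom_eq {f : C →* A} (hf : ∀ g : G, conjHom g f = f) :
    (f.ker.map C.subtype).Normal := by
  refine ⟨fun _ hn g => ?_⟩
  obtain ⟨c, hc, rfl⟩ := mem_map.mp hn
  refine mem_map.mpr ⟨MulAut.conjNormal g c, ?_, by simp⟩
  rw [MonoidHom.mem_ker, ← hf g, conjHom_apply, ← MulAut.mul_apply, ← map_mul, inv_mul_cancel,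
    map_one, MulAut.one_apply, MonoidHom.mem_ker.mp hc, map_one]

variable [Fintype (G ⧸ C)]

-- The choice of representatives does not matter, by `conjHom_eq_self_of_mem`.
noncomputable def conjNorm (f : C →* A) : C →* A :=
  ∏ x : G ⧸ C, conjHom x.out f

theorem conjHom_conjNorm (hCA : C ≤ centralizer A) (g : G) (f : C →* A) :
    conjHom g (conjNorm f) = conjNorm f := by
  rw [conjNorm, map_prod]
  simp_rw [← conjHom_out_smul hCA]
  exact Fintype.prod_equiv (MulAction.toPerm g) _ _ fun _ => rfl

theorem conjNorm_inclusion_eq_pow (hAC : A ≤ C) {e : ℕ} (f : C →* A)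
    (hf : ∀ a : A, f (inclusion hAC a) = a ^ e) (a : A) :
    conjNorm f (inclusion hAC a) = a ^ (e * C.index) := by
  have hconj : ∀ g : G, conjHom g f (inclusion hAC a) = a ^ e := fun g => by
    have : MulAut.conjNormal g⁻¹ (inclusion hAC a) = inclusion hAC (MulAut.conjNormal g⁻¹ a) := by
      ext; simp
    rw [conjHom_apply, this, hf, map_pow, ← MulAut.mul_apply, ← map_mul, mul_inv_cancel, map_one,
      MulAut.one_apply]
  rw [conjNorm, MonoidHom.finsetProd_apply]
  simp_rw [hconj]
  rw [Finset.prod_const, Finset.card_univ, ← pow_mul, index_eq_card, Nat.card_eq_fintype_card]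

end ConjNorm

namespace Subgroup

variable {G : Type*} [Group G] {A C : Subgroup G} (hAC : A ≤ C) (f : C →* A)

theorem disjoint_map_ker_of_injective (hf : Function.Injective (f.comp (inclusion hAC))) :
    Disjoint A (f.ker.map C.subtype) := by
  refine disjoint_iff_inf_le.mpr fun a ⟨haA, haD⟩ => ?_
  obtain ⟨c, hc, rfl⟩ := mem_map.mp haD
  have : f.comp (inclusion hAC) ⟨c, haA⟩ = f.comp (inclusion hAC) 1 := by
    rw [map_one, MonoidHom.comp_apply, ← MonoidHom.mem_ker]
    exact hc
  simpa using congrArg Subtype.val (hf this)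

theorem le_sup_map_ker_of_surjective (hf : Function.Surjective (f.comp (inclusion hAC))) :
    C ≤ A ⊔ f.ker.map C.subtype := by
  intro c hc
  obtain ⟨a, ha⟩ := hf (f ⟨c, hc⟩)
  have hker : inclusion hAC a⁻¹ * ⟨c, hc⟩ ∈ f.ker := by
    rw [MonoidHom.mem_ker, map_mul, ← ha]
    simp
  simpa using mul_mem_sup a.2 (mem_map_of_mem C.subtype hker)

theorem exists_isComplement'_of_disjoint_of_coprime {D : Subgroup G} [A.Normal] [D.Normal]
    (hAD : Disjoint A D) (hcop : (Nat.card A).Coprime (A ⊔ D).index) :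
    ∃ S : Subgroup G, IsComplement' A S := by
  let π := QuotientGroup.mk' D
  have hπ : Function.Surjective π := QuotientGroup.mk'_surjective D
  have hindex : (A.map π).index = (A ⊔ D).index := by
    rw [← index_comap_of_surjective _ hπ, comap_map_eq, QuotientGroup.ker_mk']
  obtain ⟨H, hH⟩ := exists_right_complement'_of_coprime
    (hindex ▸ hcop.coprime_dvd_left (card_map_dvd A π))
  refine ⟨H.comap π, isComplement'_of_disjoint_and_mul_eq_univ ?_ ?_⟩
  · refine disjoint_iff_inf_le.mpr fun a ⟨haA, haS⟩ => ?_
    have : π a = 1 := disjoint_iff_inf_le.mp hH.disjoint ⟨mem_map_of_mem π haA, haS⟩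
    exact disjoint_iff_inf_le.mp hAD ⟨haA, (QuotientGroup.eq_one_iff a).mp this⟩
  · refine Set.eq_univ_of_forall fun g => ?_
    obtain ⟨⟨⟨_, a, haA, rfl⟩, _, hh⟩, hg⟩ := hH.2 (π g)
    refine ⟨a, haA, a⁻¹ * g, ?_, mul_inv_cancel_left a g⟩
    change π (a⁻¹ * g) ∈ H
    rwa [map_mul, map_inv, ← hg, inv_mul_cancel_left]

end Subgroup

open scoped IsMulCommutative in
theorem Sylow.exists_isComplement'_of_le {G : Type*} [Group G] [Finite G] {p : ℕ} [Fact p.Prime]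
    (P : Sylow p G) [IsMulCommutative P] (hP : ∀ x ∈ P, x ^ p = 1) {A : Subgroup G} [A.Normal]
    (hAP : A ≤ P) : ∃ S : Subgroup G, IsComplement' A S := by
  let C := centralizer (A : Set G)
  have := isMulCommutative_of_le hAP
  have hPC : (P : Subgroup G) ≤ C :=
    fun x hx => mem_centralizer_iff.mpr fun a ha => setLike_mul_comm (hAP ha) hx
  obtain ⟨τ, hτ⟩ := exists_hom_inclusion_eq_pow_relIndex hP hAP hPC le_rfl
  let : Fintype (G ⧸ C) := Fintype.ofFinite _
  let Ψ := conjNorm τ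
  have hΨ : ⇑(Ψ.comp (inclusion (hAP.trans hPC))) = (· ^ (P : Subgroup G).index) := by
    funext a
    rw [MonoidHom.comp_apply, conjNorm_inclusion_eq_pow _ _ hτ, relIndex_mul_index hPC]
  have hpow : Function.Bijective (· ^ (P : Subgroup G).index : A → A) :=
    ((P.2.to_le hAP).powEquiv' P.not_dvd_index).bijective
  have : (Ψ.ker.map C.subtype).Normal :=
    normal_map_ker_of_forall_conjHom_eq (conjHom_conjNorm le_rfl · τ)
  refine exists_isComplement'_of_disjoint_of_coprime
    (disjoint_map_ker_of_injective _ Ψ (hΨ ▸ hpow.1)) ?_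
  obtain ⟨n, hn⟩ := IsPGroup.iff_card.mp (P.2.to_le hAP)
  rw [hn]
  refine Nat.Coprime.pow_left n ((Nat.Prime.coprime_iff_not_dvd Fact.out).mpr fun h => ?_)
  exact P.not_dvd_index (h.trans (index_dvd_of_le
    (hPC.trans (le_sup_map_ker_of_surjective _ Ψ (hΨ ▸ hpow.2)))))

theorem IsPGroup.card_dvd_pow_of_not_dvd {G : Type*} [Group G] [Finite G] {p k : ℕ}
    [Fact p.Prime] {H : Subgroup G} (hH : IsPGroup p H) (hG : ¬ p ^ (k + 1) ∣ Nat.card G) :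
    Nat.card H ∣ p ^ k := by
  obtain ⟨n, hn⟩ := IsPGroup.iff_card.mp hH
  rw [hn]
  exact pow_dvd_pow p (not_lt.mp fun h =>
    hG ((pow_dvd_pow p h).trans (hn ▸ card_subgroup_dvd_card H)))

theorem isMulCommutative_of_card_dvd_prime_sq {H : Type*} [Group H] {p : ℕ} [hp : Fact p.Prime]
    (h : Nat.card H ∣ p ^ 2) : IsMulCommutative H := by
  obtain ⟨k, hk, hcard⟩ := (Nat.dvd_prime_pow hp.out).mp h
  interval_cases k
  · have := (Nat.card_eq_one_iff_unique.mp (by simpa using hcard)).1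
    exact ⟨⟨fun a b => Subsingleton.elim _ _⟩⟩
  · have := isCyclic_of_prime_card (p := p) (by simpa using hcard)
    exact ⟨⟨IsCyclic.commGroup.mul_comm⟩⟩
  · exact IsPGroup.isMulCommutative_of_card_eq_prime_sq hcard

open Polynomial in
theorem Module.End.pow_prime_pow_eq_one_of_finrank_lt {ℓ q k : ℕ} [Fact ℓ.Prime] [Fact q.Prime]
    {V : Type*} [AddCommGroup V] [Module (ZMod ℓ) V] [FiniteDimensional (ZMod ℓ) V]
    (hℓq : ℓ.Coprime (q ^ (k + 1)))
    (hdim : Module.finrank (ZMod ℓ) V < orderOf (ZMod.unitOfCoprime ℓ hℓq))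
    (f : Module.End (ZMod ℓ) V) (hf : f ^ q ^ (k + 1) = 1) : f ^ q ^ k = 1 := by
  have hm : minpoly (ZMod ℓ) f ∣ cyclotomic (q ^ (k + 1)) (ZMod ℓ) * (X ^ q ^ k - 1) := by
    rw [cyclotomic_prime_pow_mul_X_pow_sub_one]
    exact minpoly.dvd _ _ (by simp [hf])
  have hcop : IsCoprime (minpoly (ZMod ℓ) f) (cyclotomic (q ^ (k + 1)) (ZMod ℓ)) := by
    refine isCoprime_of_irreducible_dvd (fun h => cyclotomic_ne_zero _ _ h.2) fun r hr hrm hrΦ => ?_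
    -- over `𝔽_ℓ`, every irreducible factor of `Φ_{q^(k+1)}` has degree the order of `ℓ`
    have hdeg := natDegree_of_dvd_cyclotomic_of_irreducible ((ZMod.card ℓ).trans (pow_one ℓ).symm)
      hℓq hrΦ hr
    have := (natDegree_le_of_dvd (hrm.trans f.minpoly_dvd_charpoly) f.charpoly_monic.ne_zero).trans
      f.charpoly_natDegree.le
    simp only [pow_one] at hdeg
    omega
  obtain ⟨r, hr⟩ := hcop.dvd_of_dvd_mul_left hm
  have := congrArg (aeval f) hr
  simpa [sub_eq_zero] using this

theorem orderOf_two_unit_zmod_twentyFive :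
    orderOf (ZMod.unitOfCoprime 2 (by norm_num : Nat.Coprime 2 (5 ^ (1 + 1)))) = 20 := by
  rw [orderOf_eq_iff (by norm_num)]
  refine ⟨by decide, fun m hm h0 => ?_⟩
  interval_cases m <;> decide

theorem Module.End.pow_five_eq_one_of_pow_twentyFive {f : Module.End (ZMod 2) V}
    (hf : f ^ 25 = 1) : f ^ 5 = 1 := by
  have : Fact (Nat.Prime 5) := ⟨by norm_num⟩
  refine f.pow_prime_pow_eq_one_of_finrank_lt (q := 5) (k := 1) (by norm_num) ?_ hf
  rw [orderOf_two_unit_zmod_twentyFive, Module.finrank_fin_fun]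
  norm_num

theorem not_five_pow_three_dvd_card_linearEquiv : ¬ 5 ^ 3 ∣ Nat.card (V ≃ₗ[ZMod 2] V) := by
  rw [← Nat.card_congr (Matrix.GeneralLinearGroup.toLin.trans
    (LinearMap.GeneralLinearGroup.generalLinearEquiv (ZMod 2) V)).toEquiv,
    Matrix.card_GL_field, ZMod.card]
  simp [Fin.prod_univ_succ]

instance LinearEquiv.finite {R M : Type*} [Semiring R] [AddCommMonoid M] [Module R M] [Finite M] :
    Finite (M ≃ₗ[R] M) :=
  Finite.of_injective _ DFunLike.coe_injective

theorem Omega8.not_five_pow_three_dvd_card : ¬ 5 ^ 3 ∣ Nat.card Omega8 := fun h =>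
  not_five_pow_three_dvd_card_linearEquiv
    (h.trans ((card_subgroup_dvd_card _).trans (card_subgroup_dvd_card Oq)))

theorem Omega8.pow_five_eq_one_of_pow_twentyFive {x : Omega8} (hx : x ^ 25 = 1) : x ^ 5 = 1 := by
  let ι := LinearEquiv.automorphismGroup.toLinearMapMonoidHom.comp
    (Oq.subtype.comp (commutator Oq).subtype)
  have hι : Function.Injective ι := LinearEquiv.toLinearMap_injective.comp
    (Oq.subtype_injective.comp (commutator Oq).subtype_injective)
  refine hι ?_
  rw [map_pow, map_one]
  exact Module.End.pow_five_eq_one_of_pow_twentyFive (by rw [← map_pow, hx, map_one])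

/-- For every subgroup Q of Ω₈⁺(2) of order 5, Q has a complement in its normalizer
N_G(Q); that is, N_G(Q) = Q ⋊ N̄ for some subgroup N̄. -/
theorem order_five_split_in_normalizer (Q : Subgroup Omega8) (hQ : Nat.card ↥Q = 5) :
    ∃ S : Subgroup ↥(Subgroup.normalizer (Q : Set Omega8)),
      Subgroup.IsComplement' (Q.subgroupOf (Subgroup.normalizer (Q : Set Omega8))) S := by
  have : Fact (Nat.Prime 5) := ⟨by norm_num⟩
  let N := normalizer (Q : Set Omega8)
  have : (Q.subgroupOf N).Normal := normal_in_normalizer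
  have hA : IsPGroup 5 (Q.subgroupOf N) :=
    .of_card (n := 1) ((Nat.card_congr (subgroupOfEquivOfLe le_normalizer).toEquiv).trans hQ)
  obtain ⟨P, hAP⟩ := hA.exists_le_sylow
  have hP : Nat.card P ∣ 5 ^ 2 := P.2.card_dvd_pow_of_not_dvd fun h =>
    Omega8.not_five_pow_three_dvd_card (h.trans (card_subgroup_dvd_card N))
  have := isMulCommutative_of_card_dvd_prime_sq hP
  refine P.exists_isComplement'_of_le (fun x hx => ?_) hAP
  have hx : x ^ 25 = 1 := orderOf_dvd_iff_pow_eq_one.mp ((orderOf_dvd_natCard _ hx).trans hP)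
  exact Subtype.ext (Omega8.pow_five_eq_one_of_pow_twentyFive (congrArg Subtype.val hx))
end

section
/- Let k = 𝔽₅ and let D₁₀ = DihedralGroup 5 be the dihedral group of order 10. Then the group algebra k[D₁₀] has exactly two isomorphism classes of simple modules, and both simple modules have k-dimension 1. -/
/-!
In characteristic `5` the rotation `r` satisfies `(r - 1)⁵ = r⁵ - 1 = 0`, so it fixes a nonzero
vector of every simple module; as the rotations form a normal subgroup, their fixed vectors form a
submodule, hence rotations act trivially on simple modules. The reflection `s` then squares to `1`,
so for `x ≠ 0` either `s x = x` or `x - s x` is a nonzero `(-1)`-eigenvector of `s`. Either way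
`D₁₀` acts on a nonzero vector through the trivial or the sign character, and Schur's lemma
identifies the simple module with the corresponding one-dimensional module.
-/

instance : Fact (Nat.Prime 5) := ⟨by norm_num⟩

open MonoidAlgebra

theorem IsSimpleModule.of_isScalarTower (R S M : Type*) [CommRing R] [Ring S] [Algebra R S]
    [AddCommGroup M] [Module R M] [Module S M] [IsScalarTower R S M] [IsSimpleModule R M] :
    IsSimpleModule S M :=
  haveI := IsSimpleModule.nontrivial R M
  { eq_bot_or_eq_top := fun W => (eq_bot_or_eq_top (W.restrictScalars R)).imp
      (Submodule.restrictScalars_eq_bot_iff R S M).mp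
      (Submodule.restrictScalars_eq_top_iff R S M).mp }

def RestrictScalars.linearEquiv (R S M : Type*) [CommSemiring R] [Semiring S] [Algebra R S]
    [AddCommMonoid M] [Module R M] [Module S M] [IsScalarTower R S M] :
    RestrictScalars R S M ≃ₗ[R] M where
  __ := RestrictScalars.addEquiv R S M
  map_smul' c x := by simp [RestrictScalars.addEquiv_map_smul]

theorem exists_ne_zero_smul_eq_zero_of_isNilpotent {R M : Type*} [Semiring R] [AddCommMonoid M]
    [Module R M] [Nontrivial M] {u : R} (hu : IsNilpotent u) :
    ∃ x : M, x ≠ 0 ∧ u • x = 0 := by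
  obtain ⟨n, hn⟩ := hu
  obtain ⟨y, hy⟩ := exists_ne (0 : M)
  have hny : u ^ n • y = 0 := by rw [hn, zero_smul]
  clear hn
  induction n generalizing y with
  | zero => exact absurd (by rwa [pow_zero, one_smul] at hny) hy
  | succ n ih =>
    by_cases huy : u • y = 0
    · exact ⟨y, hy, huy⟩
    · exact ih (u • y) huy (by rwa [← mul_smul, ← pow_succ])

section Character

variable {k G : Type*} [Field k] [Monoid G]

def CharacterLine (_χ : G →* k) : Type _ := k

namespace CharacterLine

variable (χ : G →* k)

instance : AddCommGroup (CharacterLine χ) := inferInstanceAs (AddCommGroup k)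

instance : Module k (CharacterLine χ) := inferInstanceAs (Module k k)

def equiv : k ≃ₗ[k] CharacterLine χ := LinearEquiv.refl k k

instance : Nontrivial (CharacterLine χ) := inferInstanceAs (Nontrivial k)

instance : IsSimpleModule k (CharacterLine χ) := inferInstanceAs (IsSimpleModule k k)

noncomputable instance : Module (MonoidAlgebra k G) (CharacterLine χ) :=
  Module.compHom (CharacterLine χ) (lift k k G χ).toRingHom

theorem smul_def (a : MonoidAlgebra k G) (x : CharacterLine χ) :
    a • x = lift k k G χ a • x :=
  rfl

theorem of_smul (g : G) (x : CharacterLine χ) : of k G g • x = χ g • x := by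
  rw [smul_def, lift_of]

instance : IsScalarTower k (MonoidAlgebra k G) (CharacterLine χ) where
  smul_assoc c a x := by rw [smul_def, smul_def, map_smul, smul_assoc]

instance : IsSimpleModule (MonoidAlgebra k G) (CharacterLine χ) :=
  .of_isScalarTower k _ _

theorem finrank_restrictScalars :
    Module.finrank k (RestrictScalars k (MonoidAlgebra k G) (CharacterLine χ)) = 1 :=
  (RestrictScalars.linearEquiv k (MonoidAlgebra k G) (CharacterLine χ)).finrank_eq.trans
    (Module.finrank_self k)

variable {χ}

theorem linearMap_eq_zero_of_ne {χ' : G →* k} (h : χ ≠ χ')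
    (f : CharacterLine χ →ₗ[MonoidAlgebra k G] CharacterLine χ') : f = 0 := by
  obtain ⟨g, hg⟩ := DFunLike.ne_iff.mp h
  refine LinearMap.ext fun x => smul_right_injective _ (sub_ne_zero.mpr hg) ?_
  have hx := f.map_smul (of k G g) x
  rw [of_smul, of_smul, LinearMap.map_smul_of_tower] at hx
  show (χ g - χ' g) • f x = (χ g - χ' g) • 0
  rw [sub_smul, hx, sub_self, smul_zero]

theorem isEmpty_linearEquiv {χ' : G →* k} (h : χ ≠ χ') :
    IsEmpty (CharacterLine χ ≃ₗ[MonoidAlgebra k G] CharacterLine χ') :=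
  ⟨fun e => by
    obtain ⟨x, hx⟩ := exists_ne (0 : CharacterLine χ)
    exact hx (e.map_eq_zero_iff.mp (LinearMap.congr_fun (linearMap_eq_zero_of_ne h e) x))⟩

end CharacterLine

variable {N : Type*} [AddCommGroup N] [Module (MonoidAlgebra k G) N]

def IsWeightVector (χ : G →* k) (y : N) : Prop :=
  ∀ g, of k G g • y = algebraMap k (MonoidAlgebra k G) (χ g) • y

variable {χ : G →* k} {y : N}

theorem IsWeightVector.smul_eq (hy : IsWeightVector χ y) (a : MonoidAlgebra k G) :
    a • y = algebraMap k (MonoidAlgebra k G) (lift k k G χ a) • y := by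
  induction a using MonoidAlgebra.induction_on with
  | of g => rw [hy, lift_of]
  | add a b ha hb => rw [add_smul, ha, hb, map_add, map_add, add_smul]
  | smul c a ha =>
    rw [map_smul, smul_eq_mul, map_mul, mul_smul, ← ha, Algebra.smul_def, mul_smul]

noncomputable def IsWeightVector.hom (hy : IsWeightVector χ y) :
    CharacterLine χ →ₗ[MonoidAlgebra k G] N where
  toFun c := algebraMap k (MonoidAlgebra k G) ((CharacterLine.equiv χ).symm c) • y
  map_add' c d := by rw [map_add, map_add, add_smul]
  map_smul' a c := by
    rw [CharacterLine.smul_def, map_smul, smul_eq_mul, RingHom.id_apply, ← mul_smul,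
      ← Algebra.commutes, mul_smul, hy.smul_eq a, ← mul_smul, ← map_mul, mul_comm]

theorem IsWeightVector.nonempty_linearEquiv [IsSimpleModule (MonoidAlgebra k G) N]
    (hy : IsWeightVector χ y) (hy0 : y ≠ 0) :
    Nonempty (N ≃ₗ[MonoidAlgebra k G] CharacterLine χ) := by
  have hne : hy.hom ≠ 0 := fun h => hy0 <| by
    have h1 : hy.hom (CharacterLine.equiv χ 1) = y := by
      rw [IsWeightVector.hom, LinearMap.coe_mk, AddHom.coe_mk, LinearEquiv.symm_apply_apply,
        map_one, one_smul]
    rw [← h1, h, LinearMap.zero_apply]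
  exact ⟨(LinearEquiv.ofBijective _ (LinearMap.bijective_of_ne_zero hne)).symm⟩

end Character

namespace MonoidAlgebra

theorem isNilpotent_of_sub_one_of_pow_eq_one {k G : Type*} [CommRing k] [Monoid G] {p : ℕ}
    [Fact p.Prime] [CharP k p] {g : G} (hg : g ^ p = 1) : IsNilpotent (of k G g - 1) := by
  have := charP_of_injective_algebraMap' k (A := MonoidAlgebra k G) p
  exact ⟨p, by rw [sub_pow_char_of_commute p (Commute.one_right _), ← map_pow, hg, map_one,
    one_pow, sub_self]⟩

section Invariants

variable (k : Type*) {G : Type*} (N : Type*) [CommSemiring k] [Group G] [AddCommMonoid N]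
  [Module (MonoidAlgebra k G) N]

def normalInvariants (H : Subgroup G) [H.Normal] : Submodule (MonoidAlgebra k G) N where
  carrier := {x | ∀ h ∈ H, of k G h • x = x}
  add_mem' hx hy h hh := by rw [smul_add, hx h hh, hy h hh]
  zero_mem' _ _ := smul_zero _
  smul_mem' a x hx := by
    induction a using MonoidAlgebra.induction_on with
    | of g =>
      intro h hh
      rw [← mul_smul, ← map_mul, show h * g = g * (g⁻¹ * h * g) by group, map_mul, mul_smul,
        hx _ (Subgroup.Normal.conj_mem' ‹_› h hh g)]
    | add a b ha hb =>
      intro h hh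
      rw [add_smul, smul_add, ha h hh, hb h hh]
    | smul c a ha =>
      intro h hh
      rw [Algebra.smul_def, mul_smul, ← mul_smul, ← Algebra.commutes, mul_smul, ha h hh]

end Invariants

theorem normalInvariants_zpowers_eq_top {k G N : Type*} [CommRing k] [Group G] [AddCommGroup N]
    [Module (MonoidAlgebra k G) N] [IsSimpleModule (MonoidAlgebra k G) N]
    (g : G) [(Subgroup.zpowers g).Normal] (hg : IsNilpotent (of k G g - 1)) :
    normalInvariants k N (Subgroup.zpowers g) = ⊤ := by
  have := IsSimpleModule.nontrivial (MonoidAlgebra k G) N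
  obtain ⟨x, hx0, hx⟩ := exists_ne_zero_smul_eq_zero_of_isNilpotent (M := N) hg
  rw [sub_smul, one_smul, sub_eq_zero] at hx
  let _ : MulAction G N := MulAction.compHom N (of k G)
  have hle : Subgroup.zpowers g ≤ MulAction.stabilizer G x := Subgroup.zpowers_le.mpr hx
  refine (eq_bot_or_eq_top _).resolve_left fun hbot => hx0 ?_
  rw [← Submodule.mem_bot (MonoidAlgebra k G), ← hbot]
  exact fun h hh => hle hh

end MonoidAlgebra

namespace DihedralGroup

section

variable {n : ℕ}

def sign (R : Type*) [Ring R] : DihedralGroup n →* R where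
  toFun
    | r _ => 1
    | sr _ => -1
  map_one' := rfl
  map_mul' := by rintro (i | i) (j | j) <;> simp

instance [NeZero n] : (Subgroup.zpowers (r 1 : DihedralGroup n)).Normal := by
  have h := Subgroup.index_mul_card (Subgroup.zpowers (r 1 : DihedralGroup n))
  rw [Nat.card_zpowers, orderOf_r_one, nat_card] at h
  exact Subgroup.normal_of_index_eq_two (Nat.eq_of_mul_eq_mul_right (NeZero.pos n) h)

theorem r_mem_zpowers_r_one (i : ZMod n) : r i ∈ Subgroup.zpowers (r 1 : DihedralGroup n) :=
  ⟨i.cast, by simp⟩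

variable {k : Type*} [Field k] {N : Type*} [AddCommGroup N]
  [Module (MonoidAlgebra k (DihedralGroup n)) N]

theorem isWeightVector_of_sr_zero
    (hrot : ∀ (i : ZMod n) (x : N), of k (DihedralGroup n) (r i) • x = x)
    {χ : DihedralGroup n →* k} (hχ : ∀ i, χ (r i) = 1) {z : N}
    (hz : of k (DihedralGroup n) (sr 0) • z =
      algebraMap k (MonoidAlgebra k (DihedralGroup n)) (χ (sr 0)) • z) :
    IsWeightVector χ z := by
  rintro (i | i)
  · rw [hrot, hχ, map_one, one_smul]
  · have hsr : sr i = sr 0 * r i := by rw [sr_mul_r, zero_add]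
    rw [hsr, map_mul, mul_smul, hrot, hz, map_mul χ, hχ, mul_one]

end

variable {k : Type*} [Field k] {p : ℕ} [Fact p.Prime] [CharP k p] {N : Type*} [AddCommGroup N]
  [Module (MonoidAlgebra k (DihedralGroup p)) N]
  [IsSimpleModule (MonoidAlgebra k (DihedralGroup p)) N]

theorem of_r_smul_eq_self (i : ZMod p) (x : N) : of k (DihedralGroup p) (r i) • x = x := by
  have hr : (r 1 : DihedralGroup p) ^ p = 1 := by rw [r_one_pow, ZMod.natCast_self, one_def]
  have htop := normalInvariants_zpowers_eq_top (N := N) _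
    (isNilpotent_of_sub_one_of_pow_eq_one (k := k) hr)
  have hx : x ∈ normalInvariants k N (Subgroup.zpowers (r 1)) := htop ▸ Submodule.mem_top
  exact hx _ (r_mem_zpowers_r_one i)

theorem nonempty_linearEquiv_characterLine :
    Nonempty (N ≃ₗ[MonoidAlgebra k (DihedralGroup p)]
        CharacterLine (1 : DihedralGroup p →* k)) ∨
      Nonempty (N ≃ₗ[MonoidAlgebra k (DihedralGroup p)]
        CharacterLine (sign k : DihedralGroup p →* k)) := by
  have := IsSimpleModule.nontrivial (MonoidAlgebra k (DihedralGroup p)) N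
  obtain ⟨x, hx⟩ := exists_ne (0 : N)
  set s := of k (DihedralGroup p) (sr 0)
  have hss : s • s • x = x := by
    rw [← mul_smul, ← map_mul, sr_mul_sr, sub_self, ← one_def, map_one, one_smul]
  by_cases hy : x - s • x = 0
  · refine .inl ((isWeightVector_of_sr_zero of_r_smul_eq_self (fun _ => rfl) ?_)
      |>.nonempty_linearEquiv hx)
    rw [MonoidHom.one_apply, map_one, one_smul, ← sub_eq_zero.mp hy]
  · refine .inr ((isWeightVector_of_sr_zero of_r_smul_eq_self (fun _ => rfl) ?_)
      |>.nonempty_linearEquiv hy)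
    rw [smul_sub, hss, show sign k (sr 0 : DihedralGroup p) = -1 from rfl, map_neg, map_one,
      neg_one_smul, neg_sub]

end DihedralGroup

/-- The group algebra 𝔽₅[D₁₀] has exactly two isomorphism classes of simple modules,
both of dimension 1. -/
theorem two_simple_modules_D10 :
    ∃ T : Fin 2 → ModuleCat.{0} (MonoidAlgebra (ZMod 5) (DihedralGroup 5)),
      (∀ i, IsSimpleModule (MonoidAlgebra (ZMod 5) (DihedralGroup 5)) (T i)) ∧
      (∀ i j, i ≠ j → IsEmpty ((T i)
        ≃ₗ[MonoidAlgebra (ZMod 5) (DihedralGroup 5)] (T j))) ∧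
      (∀ (N : Type) [AddCommGroup N]
          [Module (MonoidAlgebra (ZMod 5) (DihedralGroup 5)) N],
        IsSimpleModule (MonoidAlgebra (ZMod 5) (DihedralGroup 5)) N →
          ∃ i, Nonempty (N ≃ₗ[MonoidAlgebra (ZMod 5) (DihedralGroup 5)] (T i))) ∧
      (∀ i, Module.finrank (ZMod 5)
          (RestrictScalars (ZMod 5)
            (MonoidAlgebra (ZMod 5) (DihedralGroup 5)) (T i)) = 1) := by
  let χ : Fin 2 → (DihedralGroup 5 →* ZMod 5) := ![1, DihedralGroup.sign (ZMod 5)]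
  have hχ : Function.Injective χ := by
    intro i j hij
    fin_cases i <;> fin_cases j <;> first
      | rfl
      | exact absurd (DFunLike.congr_fun hij (DihedralGroup.sr 0)) (by decide)
  refine ⟨fun i => ModuleCat.of _ (CharacterLine (χ i)), fun i => inferInstance,
    fun i j hij => CharacterLine.isEmpty_linearEquiv (hχ.ne hij), fun N _ _ _ => ?_,
    fun i => CharacterLine.finrank_restrictScalars (χ i)⟩
  rcases DihedralGroup.nonempty_linearEquiv_characterLine (k := ZMod 5) (p := 5) (N := N)
    with e | e
  · exact ⟨0, e⟩
  · exact ⟨1, e⟩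
end
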